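/- For the randomizer Q with pmf p_Q(y|v) = e^ε/Ω if ⟨y,v⟩ = 1 else 1/Ω, with d ≥ 2 and v(k) = 1: P(Y(k) = 1 | v(k) = 1) = (1/Ω)·C(d−1, m−1)·2^{m−1}·e^ε. -/

import Mathlib

open Finset

/-- The output space `𝒴`: vectors in `{-1,0,1}^d` with exactly `m` nonzero entries. -/
def outputSet (d m : ℕ) : Finset (Fin d → ℤ) :=
  (Fintype.piFinset fun _ : Fin d => ({-1, 0, 1} : Finset ℤ)).filter
    (fun y => (Finset.univ.filter fun i => y i ≠ 0).card = m)

/-- `v` is a signed unit vector: exactly one nonzero entry, which is `1` or `-1`. -/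
def IsSignedUnit {d : ℕ} (v : Fin d → ℤ) : Prop :=
  ∃ k : Fin d, (v k = 1 ∨ v k = -1) ∧ ∀ i, i ≠ k → v i = 0

/-- The pmf of the randomizer: `p_Q(y|v) = e^ε/Ω` if `⟨y,v⟩ = 1` and `1/Ω` otherwise. -/
noncomputable def pQ (d : ℕ) (ε Ω : ℝ) (v y : Fin d → ℤ) : ℝ :=
  if (∑ i, y i * v i) = 1 then Real.exp ε / Ω else 1 / Ω

/-- The normalizing constant `Ω`. -/
noncomputable def Ωval (d m : ℕ) (ε : ℝ) : ℝ :=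
  ((d - 1).choose (m - 1) : ℝ) * 2 ^ (m - 1) * Real.exp ε
    + ((d - 1).choose (m - 1) : ℝ) * 2 ^ (m - 1) + ((d - 1).choose m : ℝ) * 2 ^ m

/-!
For `v = e_k`, every `y` with `y k = 1` has `⟨y, v⟩ = 1`, so each summand is `e^ε / Ω` and the sum
is `e^ε / Ω` times the number of such `y`. Deleting the `k`-th coordinate identifies them with the
vectors of `{-1, 0, 1}^(d-1)` with `m - 1` nonzero entries; these are counted by choosing the
support, `C(d-1, m-1)` ways, and then a sign on each of its `m - 1` coordinates.
-/

section SupportCount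

variable {α M : Type*} [Fintype α] [DecidableEq α] [Zero M] [DecidableEq M]

theorem filter_piFinset_support_eq {S : Finset M} (hS : 0 ∈ S) (s : Finset α) :
    {f ∈ Fintype.piFinset fun _ : α => S | ({i | f i ≠ 0} : Finset α) = s} =
      Fintype.piFinset fun i => if i ∈ s then S.erase 0 else {0} := by
  ext f
  simp only [mem_filter, Fintype.mem_piFinset, Finset.ext_iff, mem_univ, true_and]
  constructor
  · rintro ⟨hfS, hsupp⟩ i
    split_ifs with hi
    · exact mem_erase.2 ⟨(hsupp i).2 hi, hfS i⟩
    · exact mem_singleton.2 (not_not.1 fun h => hi ((hsupp i).1 h))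
  · intro hf
    refine ⟨fun i => ?_, fun i => ?_⟩ <;> have := hf i <;> split_ifs at this with hi
    · exact mem_of_mem_erase this
    · exact mem_singleton.1 this ▸ hS
    · simp [hi, ne_of_mem_erase this]
    · simp [hi, mem_singleton.1 this]

theorem card_filter_piFinset_support_eq {S : Finset M} (hS : 0 ∈ S) (s : Finset α) :
    #{f ∈ Fintype.piFinset fun _ : α => S | ({i | f i ≠ 0} : Finset α) = s} = (#S - 1) ^ #s := by
  rw [filter_piFinset_support_eq hS, Fintype.card_piFinset, ← card_erase_of_mem hS]
  simp [apply_ite Finset.card, prod_ite_mem]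

theorem card_filter_piFinset_card_support_eq {S : Finset M} (hS : 0 ∈ S) (r : ℕ) :
    #{f ∈ Fintype.piFinset fun _ : α => S | #{i | f i ≠ 0} = r} =
      (Fintype.card α).choose r * (#S - 1) ^ r := by
  rw [card_eq_sum_card_fiberwise (f := fun f => ({i | f i ≠ 0} : Finset α))
    (t := powersetCard r univ) (fun f hf => by simpa using (mem_filter.1 hf).2)]
  have hfiber : ∀ s ∈ powersetCard r (univ : Finset α),
      #{f ∈ {f ∈ Fintype.piFinset fun _ : α => S | #{i | f i ≠ 0} = r} |
        ({i | f i ≠ 0} : Finset α) = s} = (#S - 1) ^ r := by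
    intro s hs
    rw [filter_filter, ← (mem_powersetCard.1 hs).2, ← card_filter_piFinset_support_eq hS s]
    congr 1
    exact filter_congr fun f _ => ⟨fun h => h.2, fun h => ⟨h ▸ rfl, h⟩⟩
  rw [sum_congr rfl hfiber, sum_const, card_powersetCard, card_univ, smul_eq_mul]

end SupportCount

theorem Fin.card_filter_univ_succAbove {n : ℕ} (p : Fin (n + 1) → Prop) [DecidablePred p]
    (k : Fin (n + 1)) : #{i | p i} = (if p k then 1 else 0) + #{j | p (k.succAbove j)} := by
  rw [card_filter, card_filter, Fin.sum_univ_succAbove _ k]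

theorem card_filter_outputSet_apply_eq_one (n r : ℕ) (k : Fin (n + 1)) :
    #{y ∈ outputSet (n + 1) (r + 1) | y k = 1} = n.choose r * 2 ^ r := by
  have hcount := card_filter_piFinset_card_support_eq (α := Fin n)
    (S := ({-1, 0, 1} : Finset ℤ)) (by decide) r
  rw [Fintype.card_fin, show #({-1, 0, 1} : Finset ℤ) - 1 = 2 by rfl] at hcount
  rw [← hcount]
  have hsupp (y : Fin (n + 1) → ℤ) (hyk : y k = 1) :
      #{i | y i ≠ 0} = #{j | k.removeNth y j ≠ 0} + 1 := by
    rw [Fin.card_filter_univ_succAbove _ k, if_pos (by simp [hyk]), add_comm]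
    rfl
  refine card_nbij' k.removeNth (k.insertNth (α := fun _ => ℤ) 1) ?_ ?_ ?_ ?_
  · intro y hy
    simp only [outputSet, mem_coe, mem_filter] at hy ⊢
    obtain ⟨⟨hyS, hcard⟩, hyk⟩ := hy
    refine ⟨((Fin.mem_piFinset_iff_pivot_removeNth k).1 hyS).2, ?_⟩
    rw [hsupp y hyk] at hcard
    omega
  · intro z hz
    simp only [outputSet, mem_coe, mem_filter] at hz ⊢
    have hyk : k.insertNth (α := fun _ => ℤ) 1 z k = 1 := Fin.insertNth_apply_same _ _ _
    refine ⟨⟨?_, ?_⟩, hyk⟩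
    · refine (Fin.mem_piFinset_iff_pivot_removeNth k).2 ⟨by simp, ?_⟩
      rw [Fin.removeNth_insertNth]
      exact hz.1
    · rw [hsupp _ hyk, Fin.removeNth_insertNth, hz.2]
  · intro y hy
    rw [Fin.insertNth_removeNth, ← (mem_filter.1 hy).2, Function.update_eq_self]
  · intro z _
    exact Fin.removeNth_insertNth _ _ _

theorem IsSignedUnit.sum_mul_eq {d : ℕ} {v : Fin d → ℤ} (hv : IsSignedUnit v) {k : Fin d}
    (hvk : v k = 1) (y : Fin d → ℤ) : ∑ i, y i * v i = y k := by
  obtain ⟨k', -, hk'⟩ := hv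
  have hk : k' = k := by
    by_contra h
    simp [hk' k (Ne.symm h)] at hvk
  rw [hk] at hk'
  rw [sum_eq_single k (fun i _ hi => by rw [hk' i hi, mul_zero]) (by simp), hvk, mul_one]

theorem prob_one_given_one_general (d m : ℕ) (hm1 : 1 ≤ m)
    (ε : ℝ) (v : Fin d → ℤ) (hv : IsSignedUnit v) (k : Fin d)
    (hvk : v k = 1) :
    (∑ y ∈ (outputSet d m).filter fun y => y k = 1, pQ d ε (Ωval d m ε) v y)
      = (1 / Ωval d m ε) * ((d - 1).choose (m - 1) : ℝ) * 2 ^ (m - 1) * Real.exp ε := by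
  obtain ⟨n, rfl⟩ := Nat.exists_eq_add_of_le' k.pos
  obtain ⟨r, rfl⟩ := Nat.exists_eq_add_of_le' hm1
  have hterm : ∀ y ∈ (outputSet (n + 1) (r + 1)).filter fun y => y k = 1,
      pQ (n + 1) ε (Ωval (n + 1) (r + 1) ε) v y = Real.exp ε / Ωval (n + 1) (r + 1) ε := by
    intro y hy
    rw [pQ, hv.sum_mul_eq hvk, (mem_filter.1 hy).2, if_pos rfl]
  rw [sum_congr rfl hterm, sum_const, card_filter_outputSet_apply_eq_one, nsmul_eq_mul]
  push_cast
  ring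

/-- `P(Y(k) = 1 | v(k) = 1) = (1/Ω)·C(d-1,m-1)·2^{m-1}·e^ε`. -/
theorem prob_one_given_one (d m : ℕ) (hd : 2 ≤ d) (hm1 : 1 ≤ m) (hmd : m ≤ d)
    (ε : ℝ) (hε : 0 < ε) (v : Fin d → ℤ) (hv : IsSignedUnit v) (k : Fin d)
    (hvk : v k = 1) :
    (∑ y ∈ (outputSet d m).filter fun y => y k = 1, pQ d ε (Ωval d m ε) v y)
      = (1 / Ωval d m ε) * ((d - 1).choose (m - 1) : ℝ) * 2 ^ (m - 1) * Real.exp ε :=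
  prob_one_given_one_general d m hm1 ε v hv k hvk
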